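/- arXiv:2409.12491 — 2 statements merged into one kernel-verified Lean document; each statement's English description precedes it below -/
import Mathlib

section
/- The supremum over u ≥ 0 of 2u²·Q(u), where Q(u) = ∫_u^∞ e^{−x²/2}/√(2π) dx is the Gaussian tail function, is a finite positive constant; in particular sup_{u≥0} 2u²Q(u) ≥ 0.33. -/
/-!
Write `Q u = P(X > u)` for a standard normal `X`. Chebyshev's inequality gives
`u² Q(u) ≤ Var X = 1`, so the set is bounded above by `2`. For the lower bound evaluate at
`u = 6/5`, close to the maximiser: by symmetry `Q(6/5) = 1/2 - P(0 < X ≤ 6/5)`, and integrating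
the degree-5 Taylor bound for `exp t` (with its explicit remainder), `t = -x²/2 ∈ [-1, 0]`,
over `[0, 6/5]` gives `Q(6/5) ≥ 11/96 = 0.33 / (2 (6/5)²)`.
-/

open MeasureTheory ProbabilityTheory Real Set
open scoped NNReal Nat

lemma gaussianPDFReal_zero_one (x : ℝ) :
    gaussianPDFReal 0 1 x = exp (-x ^ 2 / 2) / √(2 * π) := by
  simp [gaussianPDFReal, div_eq_inv_mul]

lemma gaussianReal_real_eq_setIntegral (μ : ℝ) {v : ℝ≥0} (hv : v ≠ 0) (s : Set ℝ) :
    (gaussianReal μ v).real s = ∫ x in s, gaussianPDFReal μ v x := by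
  rw [measureReal_def, gaussianReal_apply_eq_integral μ hv,
    ENNReal.toReal_ofReal (setIntegral_nonneg_of_ae (ae_of_all _ (gaussianPDFReal_nonneg μ v)))]

lemma sq_mul_gaussianReal_real_Ioi_le (v : ℝ≥0) {u : ℝ} (hu : 0 ≤ u) :
    u ^ 2 * (gaussianReal 0 v).real (Ioi u) ≤ v := by
  rcases hu.eq_or_lt with rfl | hpos
  · simp
  have hcheb := meas_ge_le_variance_div_sq (memLp_id_gaussianReal (μ := 0) (v := v) 2) hpos
  simp only [variance_id_gaussianReal, id, integral_id_gaussianReal, sub_zero] at hcheb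
  replace hcheb := ENNReal.toReal_mono ENNReal.ofReal_ne_top hcheb
  rw [ENNReal.toReal_ofReal (by positivity), ← measureReal_def] at hcheb
  have hsub : (gaussianReal 0 v).real (Ioi u) ≤ (gaussianReal 0 v).real {x | u ≤ |x|} :=
    measureReal_mono fun x hx ↦ hx.le.trans (le_abs_self x)
  calc u ^ 2 * (gaussianReal 0 v).real (Ioi u) ≤ u ^ 2 * ((v : ℝ) / u ^ 2) := by
        gcongr; linarith
    _ = (v : ℝ) := by field_simp

lemma gaussianReal_real_Ioi_zero {v : ℝ≥0} (hv : v ≠ 0) :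
    (gaussianReal 0 v).real (Ioi 0) = 1 / 2 := by
  have hsymm : (gaussianReal 0 v).real (Iio 0) = (gaussianReal 0 v).real (Ioi 0) := by
    conv_rhs => rw [← neg_zero, ← gaussianReal_map_neg]
    rw [map_measureReal_apply measurable_neg measurableSet_Ioi]
    simp
  have hatom : gaussianReal 0 v {0} = 0 := (nullSingletonClass_gaussianReal hv).measure_singleton 0
  have hcompl :=
    probReal_compl_eq_one_sub (μ := gaussianReal 0 v) (measurableSet_Ioi (a := (0 : ℝ)))
  rw [compl_Ioi, ← measureReal_congr (Iio_ae_eq_Iic' hatom)] at hcompl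
  linarith

lemma gaussianReal_real_Ioi_eq_half_sub {v : ℝ≥0} (hv : v ≠ 0) {u : ℝ} (hu : 0 ≤ u) :
    (gaussianReal 0 v).real (Ioi u) = 1 / 2 - (gaussianReal 0 v).real (Ioc 0 u) := by
  rw [← gaussianReal_real_Ioi_zero hv, ← Ioc_union_Ioi_eq_Ioi hu,
    measureReal_union (Ioc_disjoint_Ioi le_rfl) measurableSet_Ioi]
  ring

lemma exp_neg_sq_div_two_le_taylor {x : ℝ} (hx : x ^ 2 ≤ 2) {n : ℕ} (hn : 0 < n) :
    exp (-x ^ 2 / 2) ≤ ∑ m ∈ Finset.range n, (-1 / 2) ^ m / m ! * x ^ (2 * m) +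
      (1 / 2) ^ n * ((n + 1) / (n ! * n)) * x ^ (2 * n) := by
  have habs : |-x ^ 2 / 2| = x ^ 2 / 2 := by rw [abs_of_nonpos (by nlinarith)]; ring
  have h :=
    (abs_sub_le_iff.1 (Real.exp_bound (habs ▸ (by linarith : x ^ 2 / 2 ≤ 1)) hn)).1
  rw [habs] at h
  have hsum : ∑ m ∈ Finset.range n, (-x ^ 2 / 2) ^ m / m ! =
      ∑ m ∈ Finset.range n, (-1 / 2) ^ m / m ! * x ^ (2 * m) :=
    Finset.sum_congr rfl fun m _ ↦ by rw [pow_mul]; ring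
  have hrem : (x ^ 2 / 2) ^ n * (n.succ / (n ! * n)) =
      (1 / 2) ^ n * ((n + 1) / (n ! * n)) * x ^ (2 * n) := by
    rw [pow_mul, Nat.cast_succ]; ring
  linarith

lemma integral_exp_neg_sq_div_two_le {a : ℝ} (ha : 0 ≤ a) (ha2 : a ^ 2 ≤ 2) {n : ℕ}
    (hn : 0 < n) :
    ∫ x in 0..a, exp (-x ^ 2 / 2) ≤
      ∑ m ∈ Finset.range n, (-1 / 2) ^ m / m ! * (a ^ (2 * m + 1) / (2 * m + 1)) +
        (1 / 2) ^ n * ((n + 1) / (n ! * n)) * (a ^ (2 * n + 1) / (2 * n + 1)) := by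
  calc ∫ x in 0..a, exp (-x ^ 2 / 2)
      ≤ ∫ x in 0..a, (∑ m ∈ Finset.range n, (-1 / 2) ^ m / m ! * x ^ (2 * m) +
          (1 / 2) ^ n * ((n + 1) / (n ! * n)) * x ^ (2 * n)) := by
        refine intervalIntegral.integral_mono_on ha
          (by apply Continuous.intervalIntegrable; fun_prop)
          (by apply Continuous.intervalIntegrable; fun_prop)
          fun x hx ↦ exp_neg_sq_div_two_le_taylor ?_ hn
        nlinarith [hx.1, hx.2]
    _ = _ := by
        rw [intervalIntegral.integral_add (by apply Continuous.intervalIntegrable; fun_prop)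
            (by apply Continuous.intervalIntegrable; fun_prop),
          intervalIntegral.integral_finsetSum
            fun m _ ↦ by apply Continuous.intervalIntegrable; fun_prop]
        simp [integral_pow]

lemma le_gaussianReal_real_Ioi_six_fifths : 11 / 96 ≤ (gaussianReal 0 1).real (Ioi (6 / 5)) := by
  have hI := integral_exp_neg_sq_div_two_le (a := 6 / 5) (by norm_num) (by norm_num) (n := 6)
    (by norm_num)
  norm_num [Finset.sum_range_succ, Nat.factorial] at hI
  have hsqrt : 2.505 < √(2 * π) := lt_sqrt_of_sq_lt (by nlinarith [pi_gt_d2])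
  rw [gaussianReal_real_Ioi_eq_half_sub one_ne_zero (by norm_num),
    gaussianReal_real_eq_setIntegral 0 one_ne_zero,
    ← intervalIntegral.integral_of_le (by norm_num)]
  simp only [gaussianPDFReal_zero_one, intervalIntegral.integral_div]
  rw [le_sub_comm, div_le_iff₀ (by positivity)]
  linarith

/-- Example 4: the Gaussian constant `sup_{u ≥ 0} 2u²Q(u) ≈ 0.3314` is finite
and at least `0.33`. -/
theorem gaussian_mse_constant (Q : ℝ → ℝ)
    (hQ : ∀ u, Q u = ∫ x in Set.Ioi u, Real.exp (-x ^ 2 / 2) / Real.sqrt (2 * Real.pi)) :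
    BddAbove {y : ℝ | ∃ u ≥ (0:ℝ), y = 2 * u ^ 2 * Q u} ∧
      (0.33 : ℝ) ≤ sSup {y : ℝ | ∃ u ≥ (0:ℝ), y = 2 * u ^ 2 * Q u} := by
  have hQ_eq : ∀ u, Q u = (gaussianReal 0 1).real (Ioi u) := fun u ↦ by
    simp only [hQ, gaussianReal_real_eq_setIntegral 0 one_ne_zero, gaussianPDFReal_zero_one]
  have hbdd : BddAbove {y : ℝ | ∃ u ≥ (0:ℝ), y = 2 * u ^ 2 * Q u} := by
    refine ⟨2, ?_⟩
    rintro _ ⟨u, hu, rfl⟩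
    have hcheb := sq_mul_gaussianReal_real_Ioi_le 1 hu
    rw [hQ_eq]
    push_cast at hcheb
    linarith
  refine ⟨hbdd, le_csSup_of_le hbdd ⟨6 / 5, by norm_num, rfl⟩ ?_⟩
  rw [hQ_eq]
  linarith [le_gaussianReal_real_Ioi_six_fifths]
end

section
/- For positive reals a, b, c: (ab + bc + 4ac)/(a + b + c) ≥ (1/2)·(min{a, b} + min{b, c}). -/
/-- Inequality (69) in Section 4.2. -/
theorem three_point_min_lower_bound (a b c : ℝ) (ha : 0 < a) (hb : 0 < b)
    (hc : 0 < c) :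
    (a * b + b * c + 4 * a * c) / (a + b + c) ≥
      (1 / 2) * (min a b + min b c) := by
  have hs : 0 < a + b + c := by linarith
  rw [ge_iff_le, le_div_iff₀ hs]
  rcases le_total a b with h1 | h1 <;> rcases le_total b c with h2 | h2 <;>
    simp [min_eq_left, min_eq_right, h1, h2] <;> nlinarith [sq_nonneg (a - b), sq_nonneg (b - c), sq_nonneg (a - c), mul_pos ha hc]
end
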